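/- arXiv:1104.2796 — 7 statements merged into one kernel-verified Lean document; each statement's English description precedes it below -/
import Mathlib

section
/- Every Alster space in which every compact subset is a Gδ set is σ-compact. -/
def Alster (X : Type*) [TopologicalSpace X] : Prop :=
  ∀ G : Set (Set X), (∀ g ∈ G, IsGδ g) → ⋃₀ G = Set.univ →
    (∀ K : Set X, IsCompact K → ∃ F ⊆ G, F.Finite ∧ K ⊆ ⋃₀ F) →
    ∃ H ⊆ G, H.Countable ∧ ⋃₀ H = Set.univ

/-- Every Alster space in which every compact subset is Gδ is σ-compact. -/
theorem alster_compactGdelta_sigmaCompact (X : Type*) [TopologicalSpace X]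
    (hA : Alster X) (hG : ∀ K : Set X, IsCompact K → IsGδ K) :
    SigmaCompactSpace X := by
  obtain ⟨H, hHsub, hHc, hHu⟩ := hA {K | IsCompact K} (fun g hg => hG g hg)
    (by
      ext x
      simp only [Set.mem_sUnion, Set.mem_univ, iff_true]
      exact ⟨{x}, isCompact_singleton, rfl⟩)
    (fun K hK => ⟨{K}, by simpa using hK, Set.finite_singleton K, by simp⟩)
  rw [← isSigmaCompact_univ_iff, ← hHu]
  exact isSigmaCompact_sUnion_of_isCompact hHc (fun s hs => hHsub hs)
end

section
/- Every Alster space is Menger. -/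
def Menger (X : Type*) [TopologicalSpace X] : Prop :=
  ∀ U : ℕ → Set (Set X), (∀ n, ∀ u ∈ U n, IsOpen u) → (∀ n, ⋃₀ U n = Set.univ) →
    ∃ V : ℕ → Set (Set X), (∀ n, V n ⊆ U n) ∧ (∀ n, (V n).Finite) ∧
      ⋃ n, ⋃₀ V n = Set.univ

/-!
Given open covers `Uₙ`, every choice of finite subfamilies `Fₙ ⊆ Uₙ` yields the `G_δ` set
`⋂ₙ ⋃ Fₙ`. A compact set lies in a single such set (take for `Fₙ` a finite subcover of `Uₙ`),
so the Alster property covers `X` by countably many of them, indexed by choices `F⁽ᵐ⁾`.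
The diagonal `Vₙ = F⁽ⁿ⁾ₙ` then witnesses the Menger property, since `⋂ₙ ⋃ F⁽ᵐ⁾ₙ ⊆ ⋃ F⁽ᵐ⁾ₘ`.
-/

open Set

theorem Set.iUnion_iInter_subset_iUnion_diag {α ι : Type*} (s : ι → ι → Set α) :
    ⋃ m, ⋂ n, s m n ⊆ ⋃ n, s n n := fun _ hx ↦
  let ⟨m, hm⟩ := mem_iUnion.1 hx
  mem_iUnion.2 ⟨m, mem_iInter.1 hm m⟩

section

variable {X : Type*} [TopologicalSpace X]

theorem Alster.exists_seq_iUnion_eq_univ (hX : Alster X) {ι : Type*} [Nonempty ι]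
    {φ : ι → Set X} (hφ : ∀ i, IsGδ (φ i))
    (hK : ∀ K : Set X, IsCompact K → ∃ t : Finset ι, K ⊆ ⋃ i ∈ t, φ i) :
    ∃ k : ℕ → ι, ⋃ m, φ (k m) = univ := by
  have hcompact : ∀ K : Set X, IsCompact K → ∃ F ⊆ range φ, F.Finite ∧ K ⊆ ⋃₀ F := by
    intro K hK'
    obtain ⟨t, hKt⟩ := hK K hK'
    exact ⟨φ '' t, image_subset_range _ _, t.finite_toSet.image φ, by rwa [sUnion_image]⟩
  have hcover : ⋃₀ range φ = univ := eq_univ_of_forall fun x ↦ by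
    obtain ⟨F, hFφ, -, hxF⟩ := hcompact {x} isCompact_singleton
    exact sUnion_mono hFφ (hxF rfl)
  obtain ⟨H, hHφ, hHcount, hHcover⟩ :=
    hX (range φ) (forall_mem_range.2 hφ) hcover hcompact
  choose g hg using fun s : H ↦ hHφ s.2
  have : Countable H := hHcount.to_subtype
  obtain ⟨k, hgk⟩ := countable_iff_exists_subset_range.1 (countable_range g)
  refine ⟨k, eq_univ_of_forall fun x ↦ ?_⟩
  obtain ⟨s, hsH, hxs⟩ := hHcover ▸ mem_univ x
  obtain ⟨m, hm⟩ := hgk (mem_range_self ⟨s, hsH⟩)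
  exact mem_iUnion.2 ⟨m, by rwa [hm, hg]⟩

theorem IsCompact.exists_finite_subset_sUnion {K : Set X} (hK : IsCompact K) {U : Set (Set X)}
    (hUo : ∀ u ∈ U, IsOpen u) (hKU : K ⊆ ⋃₀ U) : ∃ F ⊆ U, F.Finite ∧ K ⊆ ⋃₀ F := by
  obtain ⟨F, hFU, hF, hKF⟩ :=
    hK.elim_finite_subcover_image (c := id) hUo (by simpa [← sUnion_eq_biUnion] using hKU)
  exact ⟨F, hFU, hF, by rwa [sUnion_eq_biUnion]⟩

end

/-- Every Alster space is Menger. -/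
theorem alster_menger (X : Type*) [TopologicalSpace X] (h : Alster X) : Menger X := by
  intro U hUo hU
  let ι := ∀ n, {F : Set (Set X) // F ⊆ U n ∧ F.Finite}
  have : Nonempty ι := ⟨fun _ ↦ ⟨∅, empty_subset _, finite_empty⟩⟩
  let φ : ι → Set X := fun F ↦ ⋂ n, ⋃₀ (F n).1
  have hφ : ∀ F, IsGδ (φ F) := fun F ↦ .iInter fun n ↦
    (isOpen_sUnion fun u hu ↦ hUo n u ((F n).2.1 hu)).isGδ
  have hK : ∀ K : Set X, IsCompact K → ∃ t : Finset ι, K ⊆ ⋃ F ∈ t, φ F := by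
    intro K hKc
    choose F hFU hF hKF using fun n ↦ hKc.exists_finite_subset_sUnion (hUo n) (hU n ▸ subset_univ K)
    exact ⟨{fun n ↦ ⟨F n, hFU n, hF n⟩}, by simpa [φ] using hKF⟩
  obtain ⟨k, hk⟩ := h.exists_seq_iUnion_eq_univ hφ hK
  refine ⟨fun n ↦ (k n n).1, fun n ↦ (k n n).2.1, fun n ↦ (k n n).2.2, ?_⟩
  exact univ_subset_iff.1 (hk ▸ iUnion_iInter_subset_iUnion_diag fun m n ↦ ⋃₀ (k m n).1)
end

section
/- Every Lindelöf space of cardinality strictly less than the dominating number 𝔡 is Menger. -/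
/-- The dominating number 𝔡: the least cardinality of a family D ⊆ ω^ω such that every
f ∈ ω^ω is eventually dominated by some g ∈ D. -/
noncomputable def dominatingNumber : Cardinal :=
  sInf {c | ∃ D : Set (ℕ → ℕ), Cardinal.mk D = c ∧
    ∀ f : ℕ → ℕ, ∃ g ∈ D, ∀ᶠ n in Filter.atTop, f n ≤ g n}

/-! Enumerate a countable subcover of the `n`-th cover as `u n 0, u n 1, …` and send each point
`x` to the function `n ↦ (least k with x ∈ u n k)`. Fewer than `𝔡` such functions do not
dominate, so some `g` is infinitely often above each of them; then the finite families
`{u n k | k ≤ g n}` cover the space. -/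

open Set Filter

theorem LindelofSpace.exists_seq_subcover {X : Type*} [TopologicalSpace X] [LindelofSpace X]
    [Nonempty X] {𝒰 : Set (Set X)} (hopen : ∀ u ∈ 𝒰, IsOpen u) (hcov : ⋃₀ 𝒰 = univ) :
    ∃ u : ℕ → Set X, (∀ k, u k ∈ 𝒰) ∧ ∀ x, ∃ k, x ∈ u k := by
  have : Nonempty 𝒰 := by
    obtain ⟨x⟩ := ‹Nonempty X›
    obtain ⟨v, hv, -⟩ := hcov ▸ mem_univ x
    exact ⟨⟨v, hv⟩⟩
  obtain ⟨f, hf⟩ := isLindelof_univ.indexed_countable_subcover (fun v : 𝒰 ↦ (v : Set X))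
    (fun v ↦ hopen v v.2) (by rw [← sUnion_eq_iUnion, hcov])
  exact ⟨fun k ↦ f k, fun k ↦ (f k).2, fun x ↦ by simpa using hf (mem_univ x)⟩

theorem exists_frequently_lt_of_mk_lt_dominatingNumber {ι : Type} (hι : Cardinal.mk ι < dominatingNumber)
    (F : ι → ℕ → ℕ) : ∃ g : ℕ → ℕ, ∀ i, ∃ᶠ n in atTop, F i n < g n := by
  by_contra! hdom
  have : dominatingNumber ≤ Cardinal.mk (range F) :=
    csInf_le (OrderBot.bddBelow _) ⟨range F, rfl, fun g ↦ by
      obtain ⟨i, hi⟩ := hdom g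
      exact ⟨F i, mem_range_self i, by simpa [not_frequently] using hi⟩⟩
  exact (this.trans Cardinal.mk_range_le).not_gt hι

/-- Every Lindelöf space of cardinality < 𝔡 is Menger. -/
theorem lindelof_small_menger (X : Type) [TopologicalSpace X] [LindelofSpace X]
    (h : Cardinal.mk X < dominatingNumber) : Menger X := by
  intro U hopen hcov
  cases isEmpty_or_nonempty X
  · exact ⟨fun _ ↦ ∅, fun _ ↦ empty_subset _, fun _ ↦ finite_empty,
      eq_univ_of_forall isEmptyElim⟩
  choose u hu hex using fun n ↦ LindelofSpace.exists_seq_subcover (hopen n) (hcov n)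
  classical
  obtain ⟨g, hg⟩ := exists_frequently_lt_of_mk_lt_dominatingNumber h
    fun x n ↦ Nat.find (hex n x)
  refine ⟨fun n ↦ u n '' Iic (g n), fun n ↦ image_subset_iff.mpr fun k _ ↦ hu n k,
    fun n ↦ (finite_Iic _).image _, eq_univ_of_forall fun x ↦ ?_⟩
  obtain ⟨n, hn⟩ := (hg x).exists
  exact mem_iUnion.mpr ⟨n, u n _, mem_image_of_mem _ hn.le, Nat.find_spec (hex n x)⟩
end

section
/- For every open cover 𝒰 of a Lindelöf regular (T3) space X, there exist a separable metrizable space Y, a continuous map f : X → Y, and an open cover 𝒱 of Y such that {f⁻¹(V) : V ∈ 𝒱} refines 𝒰. -/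
open Set Topology

/-!
In a regular space every point has a closed neighbourhood inside a member of the cover, and by
the Lindelöf property countably many of them, `s n ⊆ u n`, cover the space. Regular Lindelöf spaces
are normal, so Urysohn's lemma gives `g n : X → [0, 1]` equal to `1` on `s n` and `0` off `u n`.
The map `x ↦ (g n x)ₙ` into `ℕ → ℝ` is continuous, its range is separable metrizable, and the open
sets `{y | 0 < y n}` cover the range with preimages `{0 < g n} ⊆ u n`.
-/

section Lindelof

variable {X : Type*} [TopologicalSpace X] [LindelofSpace X] [RegularSpace X]

theorem exists_seq_isClosed_subset_mem_of_sUnion_eq_univ [Nonempty X] {U : Set (Set X)}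
    (hU : ∀ u ∈ U, IsOpen u) (hcov : ⋃₀ U = univ) :
    ∃ (s u : ℕ → Set X), (∀ n, IsClosed (s n)) ∧ (∀ n, u n ∈ U) ∧ (∀ n, s n ⊆ u n) ∧
      ⋃ n, s n = univ := by
  have hmem (x : X) : ∃ u ∈ U, x ∈ u := by simpa [← hcov] using mem_univ x
  choose u huU hxu using hmem
  have hnhds (x : X) : ∃ s ∈ 𝓝 x, IsClosed s ∧ s ⊆ u x :=
    (closed_nhds_basis x).mem_iff.mp ((hU _ (huU x)).mem_nhds (hxu x)) |>.imp
      fun _ ⟨⟨hs, hcl⟩, hsu⟩ ↦ ⟨hs, hcl, hsu⟩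
  choose s hs hscl hsu using hnhds
  obtain ⟨t, htc, hcover⟩ := LindelofSpace.elim_nhds_subcover s hs
  have htne : t.Nonempty := by
    obtain ⟨x₀⟩ := ‹Nonempty X›
    obtain ⟨x, hxt, -⟩ := mem_iUnion₂.mp (hcover ▸ mem_univ x₀)
    exact ⟨x, hxt⟩
  obtain ⟨e, rfl⟩ := htc.exists_eq_range htne
  exact ⟨s ∘ e, u ∘ e, fun n ↦ hscl _, fun n ↦ huU _, fun n ↦ hsu _,
    by simpa using hcover⟩

theorem exists_seq_continuousMap_pos_cover [Nonempty X] {U : Set (Set X)}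
    (hU : ∀ u ∈ U, IsOpen u) (hcov : ⋃₀ U = univ) :
    ∃ g : ℕ → C(X, ℝ), (∀ x, ∃ n, 0 < g n x) ∧ ∀ n, ∃ u ∈ U, {x | 0 < g n x} ⊆ u := by
  obtain ⟨s, u, hscl, huU, hsu, hcover⟩ :=
    exists_seq_isClosed_subset_mem_of_sUnion_eq_univ hU hcov
  have hurysohn (n : ℕ) : ∃ g : C(X, ℝ), EqOn g 0 (u n)ᶜ ∧ EqOn g 1 (s n) ∧
      ∀ x, g x ∈ Icc (0 : ℝ) 1 :=
    exists_continuous_zero_one_of_isClosed (hU _ (huU n)).isClosed_compl (hscl n)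
      (disjoint_compl_left.mono_right (hsu n))
  choose g hg0 hg1 _ using hurysohn
  refine ⟨g, fun x ↦ ?_, fun n ↦ ⟨u n, huU n, fun x hx ↦ ?_⟩⟩
  · obtain ⟨n, hxs⟩ := mem_iUnion.mp (hcover ▸ mem_univ x)
    exact ⟨n, by simp [hg1 n hxs]⟩
  · by_contra hxu
    simp [hg0 n hxu] at hx

end Lindelof

/-- For every open cover 𝒰 of a Lindelöf regular (T3) space X, there exist a
separable metrizable space Y, a continuous map f : X → Y, and an open cover 𝒱 of Y such
that the preimages of members of 𝒱 refine 𝒰. -/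
theorem lindelof_cover_refinement (X : Type*) [TopologicalSpace X] [LindelofSpace X]
    [T3Space X] (U : Set (Set X)) (hU : ∀ u ∈ U, IsOpen u) (hcov : ⋃₀ U = Set.univ) :
    ∃ (Y : Type) (_ : MetricSpace Y), TopologicalSpace.SeparableSpace Y ∧
      ∃ (f : X → Y) (V : Set (Set Y)), Continuous f ∧ (∀ v ∈ V, IsOpen v) ∧
        ⋃₀ V = Set.univ ∧ ∀ v ∈ V, ∃ u ∈ U, f ⁻¹' v ⊆ u := by
  cases isEmpty_or_nonempty X
  · exact ⟨Empty, inferInstance, inferInstance, isEmptyElim, ∅, continuous_of_discreteTopology,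
      by simp, Subsingleton.elim _ _, by simp⟩
  obtain ⟨g, hpos, hsub⟩ := exists_seq_continuousMap_pos_cover hU hcov
  let : MetricSpace (ℕ → ℝ) := PiCountable.metricSpace
  let f : X → ℕ → ℝ := fun x n ↦ g n x
  refine ⟨range f, inferInstance, inferInstance, rangeFactorization f,
    range fun n ↦ {y | 0 < (y : ℕ → ℝ) n}, ?_, ?_, ?_, ?_⟩
  · exact (continuous_pi fun n ↦ (g n).continuous).rangeFactorization
  · rintro - ⟨n, rfl⟩
    exact isOpen_lt continuous_const ((continuous_apply n).comp continuous_subtype_val)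
  · refine eq_univ_of_forall fun ⟨_, x, hx⟩ ↦ ?_
    obtain ⟨n, hn⟩ := hpos x
    exact mem_sUnion.mpr ⟨_, ⟨n, rfl⟩, by simpa [← hx] using hn⟩
  · rintro - ⟨n, rfl⟩
    exact hsub n
end

section
/- Every Lindelöf regular space that is projectively Menger is Menger; that is, if every continuous image of X in a separable metrizable space is Menger, and X is Lindelöf and regular, then X is Menger. -/
open Set Topology

/-- Every Lindelöf regular, projectively Menger space is Menger. -/
theorem lindelof_projectivelyMenger_menger (X : Type*) [TopologicalSpace X]
    [LindelofSpace X] [T3Space X]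
    (h : ∀ (Y : Type) [MetricSpace Y] [TopologicalSpace.SeparableSpace Y],
      ∀ f : X → Y, Continuous f → Menger (Set.range f)) :
    Menger X := by
  intro U hUo hUc
  rcases isEmpty_or_nonempty X with hX | hX
  · refine ⟨fun _ => ∅, fun n => empty_subset _, fun n => finite_empty, ?_⟩
    have : (univ : Set X) = ∅ := eq_empty_of_isEmpty _
    simp [this]
  -- Step 1: countable refinement with closures inside elements of `U n`
  have key : ∀ n : ℕ, ∃ w g : ℕ → Set X, (∀ k, IsOpen (w k)) ∧ (∀ k, g k ∈ U n) ∧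
      (∀ k, closure (w k) ⊆ g k) ∧ (⋃ k, w k = univ) := by
    intro n
    have hreg : ∀ x : X, ∃ v : Set X, IsOpen v ∧ x ∈ v ∧ ∃ u ∈ U n, closure v ⊆ u := by
      intro x
      have hx : x ∈ ⋃₀ U n := (hUc n).symm ▸ mem_univ x
      obtain ⟨u, hu, hxu⟩ := hx
      obtain ⟨t, htx, htc, hts⟩ := exists_mem_nhds_isClosed_subset
        ((hUo n u hu).mem_nhds hxu)
      exact ⟨interior t, isOpen_interior, mem_interior_iff_mem_nhds.mpr htx, u, hu,
        (closure_minimal interior_subset htc).trans hts⟩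
    choose v hvo hxv hvu using hreg
    obtain ⟨r, hr⟩ := isLindelof_univ.indexed_countable_subcover v hvo
      (fun x _ => mem_iUnion.mpr ⟨x, hxv x⟩)
    choose g hg hcl using fun x => hvu x
    refine ⟨fun k => v (r k), fun k => g (r k), fun k => hvo _, fun k => hg _,
      fun k => hcl _, ?_⟩
    exact eq_univ_of_univ_subset hr
  choose w g hwo hgU hcl hwc using key
  -- Step 2: Urysohn functions
  have hf : ∀ n k : ℕ, ∃ f : C(X, ℝ), EqOn f 0 (g n k)ᶜ ∧ EqOn f 1 (closure (w n k)) ∧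
      ∀ x, f x ∈ Icc (0 : ℝ) 1 := by
    intro n k
    exact exists_continuous_zero_one_of_isClosed
      (isClosed_compl_iff.mpr (hUo n _ (hgU n k))) isClosed_closure
      (disjoint_compl_left_iff_subset.mpr (hcl n k))
  choose f hf0 hf1 _hf01 using hf
  -- Step 3: map into a separable metric space
  letI : MetricSpace (ℕ × ℕ → ℝ) := PiCountable.metricSpace
  haveI : TopologicalSpace.SeparableSpace (ℕ × ℕ → ℝ) := by
    have : SecondCountableTopology (ℕ × ℕ → ℝ) := by infer_instance
    exact TopologicalSpace.SecondCountableTopology.to_separableSpace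
  set F : X → (ℕ × ℕ → ℝ) := fun x p => f p.1 p.2 x with hF
  have hFc : Continuous F := continuous_pi fun p => (f p.1 p.2).continuous
  have hM := h (ℕ × ℕ → ℝ) F hFc
  -- Step 4: covers of the range
  set E : ℕ → ℕ → Set (Set.range F) := fun n k => {y | (y : ℕ × ℕ → ℝ) (n, k) > 0} with hE
  have hMres := hM (fun n => {s | ∃ k, s = E n k}) ?_ ?_
  · obtain ⟨V', hV'sub, hV'fin, hV'cov⟩ := hMres
    classical
    set kk : ℕ → Set (Set.range F) → ℕ := fun n s =>
      if hk : ∃ k, s = E n k then hk.choose else 0 with hkk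
    refine ⟨fun n => (fun s => g n (kk n s)) '' V' n, ?_, fun n => (hV'fin n).image _, ?_⟩
    · intro n u hu
      obtain ⟨s, _, rfl⟩ := hu
      exact hgU n _
    · apply eq_univ_of_forall
      intro x
      have : (⟨F x, mem_range_self x⟩ : Set.range F) ∈ ⋃ n, ⋃₀ V' n :=
        hV'cov ▸ mem_univ _
      obtain ⟨t, ⟨n, rfl⟩, s, hsV, hys⟩ := this
      have hkex : ∃ k, s = E n k := hV'sub n hsV
      have hseq : s = E n (kk n s) := by
        rw [hkk]; simp only [dif_pos hkex]; exact hkex.choose_spec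
      rw [hseq] at hys
      have hpos : f n (kk n s) x > 0 := hys
      have hxg : x ∈ g n (kk n s) := by
        by_contra hxg
        have := hf0 n (kk n s) hxg
        simp only [Pi.zero_apply] at this
        rw [this] at hpos; exact lt_irrefl 0 hpos
      exact mem_iUnion.mpr ⟨n, ⟨g n (kk n s), ⟨s, hsV, rfl⟩, hxg⟩⟩
  · intro n s hs
    obtain ⟨k, rfl⟩ := hs
    exact isOpen_lt continuous_const
      ((continuous_apply (n, k)).comp continuous_subtype_val)
  · intro n
    apply eq_univ_of_forall
    rintro ⟨y, x, rfl⟩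
    have hx : x ∈ ⋃ k, w n k := (hwc n).symm ▸ mem_univ x
    obtain ⟨k, hk⟩ := mem_iUnion.mp hx
    have : f n k x = 1 := hf1 n k (subset_closure hk)
    exact ⟨E n k, ⟨k, rfl⟩, show F x (n, k) > 0 by rw [hF]; simp [this]⟩
end

section
/- Every σ-compact Hausdorff space in which every point is a Gδ set has cardinality at most 2^ℵ₀. -/
/-!
Each compact piece `K` of `X` is a compact Hausdorff space whose points are `Gδ`, hence first
countable: finite intersections of closed neighbourhoods `V n ⊆ U n` of `x`, where
`{x} = ⋂ n, U n`, form a neighbourhood basis by compactness.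

Arhangel'skii's closing-off argument bounds `#K` by `𝔠`. By recursion over `ω₁` one builds
a set `S` with `#S ≤ 𝔠` containing the limits of its convergent sequences and, for every
countable family of basic neighbourhoods of points of `S` that fails to cover `K`, a point
outside that family. Then `S` is closed, hence compact; if some `p ∉ S`, finitely many basic
neighbourhoods of points of `S` that avoid `p` cover `S`, yet `S` contains a point outside them.
-/

open Set Filter Topology Cardinal
open scoped Ordinal

universe u v

section Cardinality

variable {Y : Type u}

theorem mk_setOf_forall_mem_le_continuum {U : Set Y} (hU : #U ≤ 𝔠) :
    #{v : ℕ → Y | ∀ n, v n ∈ U} ≤ 𝔠 := by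
  have e : {v : ℕ → Y | ∀ n, v n ∈ U} ≃ (ℕ → U) := Equiv.subtypePiEquivPi
  rw [mk_congr e, mk_arrow]
  simp only [mk_nat, lift_aleph0, lift_uzero]
  exact (power_le_power_right hU).trans continuum_power_aleph0.le

theorem mk_iUnion_le_continuum {ι : Type v} [Countable ι] {f : ι → Set Y}
    (hf : ∀ i, #(f i) ≤ 𝔠) : #(⋃ i, f i) ≤ 𝔠 := by
  rw [← Cardinal.lift_le.{v}]
  refine (mk_iUnion_le_lift f).trans ?_
  calc lift.{u} #ι * ⨆ i, lift.{v} #(f i) ≤ 𝔠 * 𝔠 := by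
        gcongr
        · simpa using (mk_le_aleph0 (α := ι)).trans aleph0_le_continuum
        · exact ciSup_le' fun i => by simpa using hf i
    _ = lift.{v} 𝔠 := by simp

end Cardinality

section ClosingOff

variable {Y : Type u} (A : Set Y) (F : (ℕ → Y) → Set Y)

noncomputable def closingOffStage : Ordinal.{v} → Set Y :=
  WellFoundedLT.fix fun o T =>
    A ∪ ⋃ (w : ℕ → Y) (_ : ∀ n, ∃ j, ∃ h : j < o, w n ∈ T j h), F w

theorem closingOffStage_eq (o : Ordinal.{v}) :
    closingOffStage A F o =
      A ∪ ⋃ (w : ℕ → Y) (_ : ∀ n, w n ∈ ⋃ j < o, closingOffStage A F j), F w := by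
  rw [closingOffStage, WellFoundedLT.fix_eq]
  simp only [mem_iUnion, exists_prop]

variable {A F}

theorem mk_closingOffStage_le (hA : #A ≤ 𝔠) (hF : ∀ w, #(F w) ≤ 𝔠) {o : Ordinal.{v}}
    (ho : o < ω₁) : #(closingOffStage A F o) ≤ 𝔠 := by
  induction o using WellFoundedLT.induction with
  | ind o ih =>
  set U := ⋃ j < o, closingOffStage A F j
  have hU : #U ≤ 𝔠 := by
    refine mk_biUnion_le_of_le_lift ?_ aleph0_le_continuum _ fun j hj => ih j hj (hj.trans ho)
    have : o.card ≤ 𝔠 :=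
      ((lt_omega_iff_card_lt.mp ho).le.trans (by simp)).trans aleph_one_le_continuum
    exact (Cardinal.lift_le.mpr this).trans_eq (by simp)
  rw [closingOffStage_eq]
  refine (mk_union_le _ _).trans ?_
  have hseq : #(⋃ w ∈ {w : ℕ → Y | ∀ n, w n ∈ U}, F w) ≤ 𝔠 := by
    refine (mk_biUnion_le _ _).trans ?_
    have hsup : ⨆ w : {w : ℕ → Y | ∀ n, w n ∈ U}, #(F w) ≤ 𝔠 :=
      ciSup_le' fun w => hF w
    calc _ ≤ 𝔠 * 𝔠 := mul_le_mul' (mk_setOf_forall_mem_le_continuum hU) hsup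
      _ = 𝔠 := mul_eq_self aleph0_le_continuum
  calc #A + _ ≤ 𝔠 + 𝔠 := add_le_add hA hseq
    _ = 𝔠 := add_eq_self aleph0_le_continuum

theorem exists_superset_mk_le_continuum_closedUnder_seq (hA : #A ≤ 𝔠)
    (hF : ∀ w, #(F w) ≤ 𝔠) :
    ∃ S, A ⊆ S ∧ #S ≤ 𝔠 ∧ ∀ w : ℕ → Y, (∀ n, w n ∈ S) → F w ⊆ S := by
  set S := ⋃ o < (ω₁ : Ordinal.{0}), closingOffStage A F o
  have hstage : ∀ o < ω₁, closingOffStage A F o ⊆ S := fun o ho =>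
    subset_iUnion₂ (s := fun o _ => closingOffStage A F o) o ho
  refine ⟨S, ?_, ?_, ?_⟩
  · refine Subset.trans ?_ (hstage 0 (Ordinal.omega_pos 1))
    rw [closingOffStage_eq]
    exact subset_union_left
  · refine mk_biUnion_le_of_le_lift ?_ aleph0_le_continuum _ fun o ho =>
      mk_closingOffStage_le hA hF ho
    simpa using aleph_one_le_continuum
  · intro w hw
    choose o ho hwo using fun n => mem_iUnion₂.mp (hw n)
    set s := ⨆ n, o n
    have hs : s < ω₁ := Ordinal.iSup_lt_omega_one ho
    have hos : ∀ n, o n < Order.succ s := fun n => Order.lt_succ_of_le (Ordinal.le_iSup o n)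
    refine Subset.trans ?_ (hstage _ ((isSuccLimit_omega 1).succ_lt hs))
    rw [closingOffStage_eq]
    exact subset_union_of_subset_right
      (subset_iUnion₂ (s := fun w _ => F w) w fun n =>
        mem_iUnion₂.mpr ⟨o n, hos n, hwo n⟩) _

end ClosingOff

section Topology

variable {X : Type u} [TopologicalSpace X]

theorem IsCompact.exists_seq_subcover {s : Set X} (hs : IsCompact s) (hne : s.Nonempty)
    (U : X → Set X) (hU : ∀ x ∈ s, U x ∈ 𝓝 x) :
    ∃ w : ℕ → X, (∀ n, w n ∈ s) ∧ s ⊆ ⋃ n, U (w n) := by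
  obtain ⟨t, hts, hcover⟩ := hs.elim_nhds_subcover U hU
  have htne : (t : Set X).Nonempty := by
    obtain ⟨x, hx⟩ := hne
    obtain ⟨y, hy, -⟩ := mem_iUnion₂.mp (hcover hx)
    exact ⟨y, hy⟩
  obtain ⟨w, hw⟩ := t.countable_toSet.exists_eq_range htne
  refine ⟨w, fun n => hts _ (by simp [← Finset.mem_coe, hw]), fun x hx => ?_⟩
  obtain ⟨y, hy, hxy⟩ := mem_iUnion₂.mp (hcover hx)
  obtain ⟨n, rfl⟩ : y ∈ range w := hw ▸ hy
  exact mem_iUnion_of_mem n hxy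

theorem firstCountableTopology_of_isGδ_singleton [CompactSpace X] [T2Space X]
    (h : ∀ x : X, IsGδ {x}) : FirstCountableTopology X := by
  refine ⟨fun x => ?_⟩
  obtain ⟨U, hUo, hxU⟩ := (h x).eq_iInter_nat
  have hxU' : ∀ n, U n ∈ 𝓝 x := fun n =>
    (hUo n).mem_nhds (mem_iInter.mp (hxU ▸ mem_singleton x) n)
  choose V hV hVU using fun n => (closed_nhds_basis x).mem_iff.mp (hxU' n)
  refine HasBasis.isCountablyGenerated (p := fun _ : Finset ℕ => True)
    (s := fun t => ⋂ n ∈ t, V n) ⟨fun O => ?_⟩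
  simp only [true_and]
  constructor
  · intro hO
    have hdir : Directed (· ⊇ ·) fun t : Finset ℕ => ⋂ n ∈ t, V n :=
      Antitone.directed_ge fun t t' htt' => biInter_subset_biInter_left htt'
    refine exists_subset_nhds_of_isCompact hdir
      (fun t => (isClosed_biInter fun n _ => (hV n).2).isCompact) fun y hy => ?_
    have hyx : y = x := by
      have : y ∈ ⋂ n, U n := mem_iInter.mpr fun n =>
        hVU n (mem_iInter₂.mp (mem_iInter.mp hy {n}) n (Finset.mem_singleton_self n))
      rwa [← hxU] at this
    exact hyx ▸ hO
  · rintro ⟨t, ht⟩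
    exact mem_of_superset ((biInter_finset_mem t).mpr fun n _ => (hV n).1) ht

theorem mk_le_continuum_of_compactSpace [CompactSpace X] [T2Space X]
    [FirstCountableTopology X] : #X ≤ 𝔠 := by
  rcases isEmpty_or_nonempty X with hX | hX
  · simp
  have x₀ : X := Classical.arbitrary X
  choose B hB using fun x : X => (𝓝 x).exists_antitone_basis
  -- a point outside `⋃ k, B (w k) (m k)`, provided that union is not all of `X`
  let escape (w : ℕ → X) (m : ℕ → ℕ) : X :=
    Classical.epsilon fun y => y ∉ ⋃ k, B (w k) (m k)
  let F (w : ℕ → X) : Set X := {y | Tendsto w atTop (𝓝 y)} ∪ range (escape w)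
  have hF : ∀ w, #(F w) ≤ 𝔠 := by
    intro w
    have hlim : #{y | Tendsto w atTop (𝓝 y)} ≤ 𝔠 :=
      (mk_le_one_iff_set_subsingleton.mpr fun y hy z hz => tendsto_nhds_unique hy hz).trans
        (one_lt_aleph0.le.trans aleph0_le_continuum)
    have hesc : #(range (escape w)) ≤ 𝔠 := by
      simpa using mk_range_le_lift (f := escape w)
    exact (mk_union_le _ _).trans
      ((add_le_add hlim hesc).trans (add_eq_self aleph0_le_continuum).le)
  obtain ⟨S, hx₀S, hS, hSF⟩ := exists_superset_mk_le_continuum_closedUnder_seq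
    (A := {x₀}) (by simpa using one_lt_aleph0.le.trans aleph0_le_continuum) hF
  have hSc : IsCompact S := by
    refine IsSeqClosed.isClosed (fun w p hw hp => ?_) |>.isCompact
    exact hSF w hw (Or.inl hp)
  suffices S = Set.univ by rwa [this, mk_univ] at hS
  refine eq_univ_of_forall fun p => by_contra fun hp => ?_
  have hsep : ∀ x ∈ S, ∃ n, B x n ⊆ {p}ᶜ := fun x hx =>
    (hB x).mem_iff.mp (compl_singleton_mem_nhds fun h => hp (h ▸ hx))
  choose! m hm using hsep
  obtain ⟨w, hwS, hcover⟩ := hSc.exists_seq_subcover ⟨x₀, hx₀S rfl⟩ (fun x => B x (m x))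
    fun x _ => (hB x).mem _
  have hescape : escape w (m ∘ w) ∉ ⋃ k, B (w k) (m (w k)) :=
    Classical.epsilon_spec (p := fun y => y ∉ ⋃ k, B (w k) (m (w k)))
      ⟨p, by simpa [mem_iUnion] using fun k => hm _ (hwS k)⟩
  exact hescape (hcover (hSF w hwS (Or.inr (mem_range_self _))))

theorem IsCompact.mk_le_continuum_of_isGδ_singleton [T2Space X] (h : ∀ x : X, IsGδ {x})
    {K : Set X} (hK : IsCompact K) : #K ≤ 𝔠 := by
  have : CompactSpace K := isCompact_iff_compactSpace.mp hK
  have : FirstCountableTopology K := firstCountableTopology_of_isGδ_singleton fun x => by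
    rw [← Subtype.val_injective.preimage_image {x}, image_singleton]
    exact (h x).preimage continuous_subtype_val
  exact mk_le_continuum_of_compactSpace

end Topology

/-- Every σ-compact Hausdorff space with points Gδ has cardinality at
most 2^ℵ₀. -/
theorem sigmaCompact_pointsGdelta_card (X : Type*) [TopologicalSpace X]
    [SigmaCompactSpace X] [T2Space X] (h : ∀ x : X, IsGδ ({x} : Set X)) :
    Cardinal.mk X ≤ Cardinal.continuum :=
  calc #X = #(⋃ n, compactCovering X n) := by rw [iUnion_compactCovering, mk_univ]
    _ ≤ 𝔠 := mk_iUnion_le_continuum fun n =>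
      (isCompact_compactCovering X n).mk_le_continuum_of_isGδ_singleton h
end

section
/- The Sorgenfrey line is Lindelöf, but the product of the Sorgenfrey line with itself is not Lindelöf. -/
/-- The Sorgenfrey topology on ℝ, generated by half-open intervals [a, b). -/
def sorgenfreyTopology : TopologicalSpace ℝ :=
  TopologicalSpace.generateFrom {s : Set ℝ | ∃ a b : ℝ, s = Set.Ico a b}

/-!
Every family of half-open intervals `[x, f x)` in `ℝ` has a countable subfamily with the same
union: countably many of the open intervals `(x, f x)` already cover their union, since `ℝ` is
second countable, and the left endpoints missed by that union index pairwise disjoint open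
intervals, so there are only countably many of them. This makes the Sorgenfrey line Lindelöf.

In the Sorgenfrey plane the antidiagonal `x + y = 0` is closed, and it is discrete because
`[x, ∞) × [-x, ∞)` meets it only in `(x, -x)`. A closed discrete subset of a Lindelöf space is
countable, but the antidiagonal is uncountable.
-/

open Set

theorem exists_countable_biUnion_Ico_eq {α : Type*} [LinearOrder α] [TopologicalSpace α]
    [OrderTopology α] [SecondCountableTopology α] (s : Set α) (f : α → α) :
    ∃ t ⊆ s, t.Countable ∧ ⋃ x ∈ t, Ico x (f x) = ⋃ x ∈ s, Ico x (f x) := by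
  obtain ⟨t, hts, htc, ht⟩ :=
    TopologicalSpace.isOpen_biUnion_countable s (fun x => Ioo x (f x)) fun _ _ => isOpen_Ioo
  set r := {x ∈ s | x < f x ∧ x ∉ ⋃ y ∈ t, Ioo y (f y)}
  have hr : r.Countable := by
    have key : ∀ ⦃a⦄, a ∈ r → ∀ ⦃b⦄, b ∈ r → a < b → Disjoint (Ioo a (f a)) (Ioo b (f b)) :=
      fun a ha b hb hab => disjoint_left.2 fun u hua hub => hb.2.2 <| ht ▸
        mem_biUnion ha.1 ⟨hab, hub.1.trans hua.2⟩
    refine PairwiseDisjoint.countable_of_Ioo (fun a ha b hb hne => ?_) fun x hx => hx.2.1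
    rcases hne.lt_or_gt with h | h
    · exact key ha hb h
    · exact (key hb ha h).symm
  refine ⟨t ∪ r, union_subset hts (sep_subset _ _), htc.union hr,
    biUnion_subset_biUnion_left (union_subset hts (sep_subset _ _)) |>.antisymm ?_⟩
  simp only [iUnion_subset_iff]
  intro x hx z hz
  by_cases hzV : z ∈ ⋃ y ∈ t, Ioo y (f y)
  · obtain ⟨y, hy, hzy⟩ := mem_iUnion₂.1 hzV
    exact mem_biUnion (Or.inl hy) (Ioo_subset_Ico_self hzy)
  · obtain rfl : x = z := hz.1.eq_of_not_lt fun hxz => hzV (ht ▸ mem_biUnion hx ⟨hxz, hz.2⟩)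
    exact mem_biUnion (Or.inr ⟨hx, hz.2, hzV⟩) hz

/-- `ℝ` carrying `sorgenfreyTopology` as its instance, kept apart from the Euclidean `ℝ`. -/
def Sorgenfrey : Type := ℝ

namespace Sorgenfrey

instance : TopologicalSpace Sorgenfrey := sorgenfreyTopology
noncomputable instance : LinearOrder Sorgenfrey := inferInstanceAs (LinearOrder ℝ)
noncomputable instance : AddCommGroup Sorgenfrey := inferInstanceAs (AddCommGroup ℝ)
instance : IsOrderedAddMonoid Sorgenfrey := inferInstanceAs (IsOrderedAddMonoid ℝ)
instance : DenselyOrdered Sorgenfrey := inferInstanceAs (DenselyOrdered ℝ)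
instance : NoMaxOrder Sorgenfrey := inferInstanceAs (NoMaxOrder ℝ)

theorem isOpen_Ico (a b : Sorgenfrey) : IsOpen (Ico a b) :=
  .basic _ ⟨a, b, rfl⟩

theorem isOpen_iff {s : Set Sorgenfrey} : IsOpen s ↔ ∀ x ∈ s, ∃ y, x < y ∧ Ico x y ⊆ s := by
  refine ⟨fun hs => ?_, fun h => isOpen_iff_forall_mem_open.2 fun x hx => ?_⟩
  · induction hs with
    | basic _ h =>
      obtain ⟨a, b, rfl⟩ := h
      exact fun x hx => ⟨b, hx.2, Ico_subset_Ico_left hx.1⟩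
    | univ => exact fun x _ => (exists_gt x).imp fun y hy => ⟨hy, subset_univ _⟩
    | inter u v _ _ hu hv =>
      intro x hx
      obtain ⟨y, hxy, hyu⟩ := hu x hx.1
      obtain ⟨y', hxy', hyv⟩ := hv x hx.2
      exact ⟨min y y', lt_min hxy hxy', subset_inter
        ((Ico_subset_Ico_right (min_le_left _ _)).trans hyu)
        ((Ico_subset_Ico_right (min_le_right _ _)).trans hyv)⟩
    | sUnion S _ hS =>
      rintro x ⟨u, hu, hx⟩
      exact (hS u hu x hx).imp fun y hy => ⟨hy.1, hy.2.trans (subset_sUnion_of_mem hu)⟩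
  · obtain ⟨y, hxy, hys⟩ := h x hx
    exact ⟨Ico x y, hys, isOpen_Ico x y, left_mem_Ico.2 hxy⟩

theorem isOpen_Ici (a : Sorgenfrey) : IsOpen (Ici a) :=
  isOpen_iff.2 fun x hx => (exists_gt x).imp fun _ hy => ⟨hy, fun _ hz => hx.trans hz.1⟩

instance : LindelofSpace Sorgenfrey := by
  refine ⟨isLindelof_of_countable_subcover fun U hU hcov => ?_⟩
  choose i hi using fun x => mem_iUnion.1 (hcov (mem_univ x))
  choose f hxf hf using fun x => isOpen_iff.1 (hU (i x)) x (hi x)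
  -- `f` is read as a map `ℝ → ℝ`, where the Euclidean topology is second countable.
  obtain ⟨t, -, ht, hcover⟩ := exists_countable_biUnion_Ico_eq (α := ℝ) univ f
  refine ⟨i '' t, ht.image i, fun z _ => ?_⟩
  have : z ∈ ⋃ x ∈ t, Ico x (f x) := hcover ▸ mem_biUnion (mem_univ z) ⟨le_rfl, hxf z⟩
  obtain ⟨x, hx, hzx⟩ := mem_iUnion₂.1 this
  exact mem_biUnion (mem_image_of_mem i hx) (hf x hzx)

def antidiagonal : Set (Sorgenfrey × Sorgenfrey) := {p | p.1 + p.2 = 0}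

theorem isOpen_setOf_add_pos : IsOpen {p : Sorgenfrey × Sorgenfrey | 0 < p.1 + p.2} := by
  refine isOpen_iff_mem_nhds.2 fun p (hp : 0 < p.1 + p.2) => Filter.mem_of_superset
    (prod_mem_nhds ((isOpen_Ici p.1).mem_nhds self_mem_Ici)
      ((isOpen_Ici p.2).mem_nhds self_mem_Ici))
    fun q hq => show 0 < q.1 + q.2 from hp.trans_le (add_le_add hq.1 hq.2)

theorem isOpen_setOf_add_neg : IsOpen {p : Sorgenfrey × Sorgenfrey | p.1 + p.2 < 0} := by
  refine isOpen_iff_mem_nhds.2 fun p (hp : p.1 + p.2 < 0) => ?_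
  obtain ⟨c, hpc, hcp⟩ := exists_between (lt_neg_iff_add_neg.2 hp)
  refine Filter.mem_of_superset (prod_mem_nhds ((isOpen_Ico p.1 c).mem_nhds ⟨le_rfl, hpc⟩)
    ((isOpen_Ico p.2 (-c)).mem_nhds ⟨le_rfl, lt_neg_of_lt_neg hcp⟩)) fun q hq => ?_
  simpa using add_lt_add hq.1.2 hq.2.2

theorem isClosed_antidiagonal : IsClosed antidiagonal := by
  have : antidiagonal = ({p | 0 < p.1 + p.2} ∪ {p | p.1 + p.2 < 0})ᶜ := by
    ext p
    simp [antidiagonal, not_lt, le_antisymm_iff]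
  rw [this]
  exact (isOpen_setOf_add_pos.union isOpen_setOf_add_neg).isClosed_compl

theorem isDiscrete_antidiagonal : IsDiscrete antidiagonal := by
  refine isDiscrete_iff_forall_mem_exists_isOpen.2 fun p hp =>
    ⟨Ici p.1 ×ˢ Ici p.2, (isOpen_Ici p.1).prod (isOpen_Ici p.2), ?_⟩
  refine Subset.antisymm (fun q ⟨⟨hq₁, hq₂⟩, hq⟩ => ?_)
    (singleton_subset_iff.2 ⟨⟨self_mem_Ici, self_mem_Ici⟩, hp⟩)
  have := (add_eq_add_iff_eq_and_eq hq₁ hq₂).1 (hp.trans hq.symm)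
  exact Prod.ext this.1.symm this.2.symm

theorem not_countable_antidiagonal : ¬ antidiagonal.Countable := fun h =>
  Cardinal.not_countable_real <| (h.image Prod.fst).mono fun x _ =>
    mem_image_of_mem Prod.fst
      (show ((x, -x) : Sorgenfrey × Sorgenfrey) ∈ antidiagonal from add_neg_cancel x)

theorem not_lindelofSpace_prod : ¬ LindelofSpace (Sorgenfrey × Sorgenfrey) := fun _ =>
  not_countable_antidiagonal <|
    isClosed_antidiagonal.isLindelof.countable_of_isDiscrete isDiscrete_antidiagonal

end Sorgenfrey

/-- The Sorgenfrey line is Lindelöf, but its square is not Lindelöf. -/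
theorem sorgenfrey_lindelof_square_not :
    @LindelofSpace ℝ sorgenfreyTopology ∧
      ¬ @LindelofSpace (ℝ × ℝ)
          (@instTopologicalSpaceProd ℝ ℝ sorgenfreyTopology sorgenfreyTopology) :=
  ⟨inferInstanceAs (LindelofSpace Sorgenfrey), Sorgenfrey.not_lindelofSpace_prod⟩
end
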